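/- Let H : ℂ² → ℂ be a smooth (real-differentiable) function and let g ∈ SU(3) with g₃₃ ≠ 0. Then (X_β H)(g) = (conj(g₁₁)/g₃₃²)·(∂H/∂y)(p(g)) − (conj(g₂₁)/g₃₃²)·(∂H/∂x)(p(g)), and (X_γ H)(g) = −(conj(g₁₂)/g₃₃²)·(∂H/∂y)(p(g)) + (conj(g₂₂)/g₃₃²)·(∂H/∂x)(p(g)). -/

import Mathlib

open Matrix

/-- The projection `p(g) = (g₁₃/g₃₃, g₂₃/g₃₃) ∈ ℂ²`. -/
noncomputable def pmap (g : Matrix (Fin 3) (Fin 3) ℂ) : ℂ × ℂ :=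
  (g 0 2 / g 2 2, g 1 2 / g 2 2)

noncomputable def matY3 : Matrix (Fin 3) (Fin 3) ℂ :=
  single 0 2 1 - single 2 0 1

noncomputable def matY4 : Matrix (Fin 3) (Fin 3) ℂ :=
  Complex.I • (single 0 2 1 + single 2 0 1)

noncomputable def matY5 : Matrix (Fin 3) (Fin 3) ℂ :=
  single 1 2 1 - single 2 1 1

noncomputable def matY6 : Matrix (Fin 3) (Fin 3) ℂ :=
  Complex.I • (single 1 2 1 + single 2 1 1)

/-- `(X_β H)(g) = (1/2) d/dt|₀ [H(p(g·exp(tY₅))) − i H(p(g·exp(tY₆)))]`. -/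
noncomputable def Xbeta (H : ℂ × ℂ → ℂ) (g : Matrix (Fin 3) (Fin 3) ℂ) : ℂ :=
  (1 / 2) * deriv (fun t : ℝ =>
    H (pmap (g * NormedSpace.exp (t • matY5)))
      - Complex.I * H (pmap (g * NormedSpace.exp (t • matY6)))) 0

/-- `(X_γ H)(g) = (1/2) d/dt|₀ [H(p(g·exp(tY₃))) − i H(p(g·exp(tY₄)))]`. -/
noncomputable def Xgamma (H : ℂ × ℂ → ℂ) (g : Matrix (Fin 3) (Fin 3) ℂ) : ℂ :=
  (1 / 2) * deriv (fun t : ℝ =>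
    H (pmap (g * NormedSpace.exp (t • matY3)))
      - Complex.I * H (pmap (g * NormedSpace.exp (t • matY4)))) 0

/-- The Wirtinger derivative `∂H/∂x = (1/2)(∂H/∂x₁ − i ∂H/∂x₂)`. -/
noncomputable def wirtX (H : ℂ × ℂ → ℂ) (p : ℂ × ℂ) : ℂ :=
  (1 / 2) * (fderiv ℝ H p (1, 0) - Complex.I * fderiv ℝ H p (Complex.I, 0))

/-- The Wirtinger derivative `∂H/∂y = (1/2)(∂H/∂y₁ − i ∂H/∂y₂)`. -/
noncomputable def wirtY (H : ℂ × ℂ → ℂ) (p : ℂ × ℂ) : ℂ :=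
  (1 / 2) * (fderiv ℝ H p (0, 1) - Complex.I * fderiv ℝ H p (0, Complex.I))

section Aux

open NormedSpace

attribute [local instance] Matrix.linftyOpSemiNormedRing Matrix.linftyOpNormedRing
  Matrix.linftyOpNormedAlgebra

theorem exp_hasDerivAt (Y : Matrix (Fin 3) (Fin 3) ℂ) :
    HasDerivAt (fun t : ℝ => NormedSpace.exp (t • Y)) Y 0 := by
  have h : HasDerivAt (fun u : ℂ => exp (u • Y)) Y ((0:ℝ) : ℂ) := by
    have h0 := hasDerivAt_exp_smul_const (𝕂 := ℂ) Y (0 : ℂ)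
    simp only [zero_smul, exp_zero, one_mul] at h0
    exact h0
  have h2 := HasDerivAt.scomp (0:ℝ) h Complex.ofRealCLM.hasDerivAt
  simp only [Function.comp_def] at h2
  simp [Complex.coe_smul, one_smul] at h2
  exact h2

noncomputable def entryCLM (g : Matrix (Fin 3) (Fin 3) ℂ) (i : Fin 3) :
    Matrix (Fin 3) (Fin 3) ℂ →ₗ[ℝ] ℂ where
  toFun A := (g * A) i 2
  map_add' A B := by simp [Matrix.mul_add]
  map_smul' r A := by simp [Matrix.mul_smul]

theorem key (H : ℂ × ℂ → ℂ) (hH : ContDiff ℝ (⊤ : ℕ∞) H) (g Y : Matrix (Fin 3) (Fin 3) ℂ)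
    (h33 : g 2 2 ≠ 0) :
    HasDerivAt (fun t : ℝ => H (pmap (g * NormedSpace.exp (t • Y))))
      (fderiv ℝ H (pmap g)
        ((((g*Y) 0 2) * g 2 2 - g 0 2 * ((g*Y) 2 2)) / (g 2 2)^2,
         (((g*Y) 1 2) * g 2 2 - g 1 2 * ((g*Y) 2 2)) / (g 2 2)^2)) 0 := by
  have hg0 : g * NormedSpace.exp ((0:ℝ) • Y) = g := by
    rw [zero_smul, exp_zero, mul_one]
  have hent : ∀ i : Fin 3, HasDerivAt (fun t : ℝ => (g * NormedSpace.exp (t • Y)) i 2)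
      ((g * Y) i 2) 0 := by
    intro i
    exact ((entryCLM g i).toContinuousLinearMap.hasFDerivAt).comp_hasDerivAt 0
      (exp_hasDerivAt Y)
  have hdiv : ∀ i : Fin 3, HasDerivAt
      (fun t : ℝ => (g * NormedSpace.exp (t • Y)) i 2 / (g * NormedSpace.exp (t • Y)) 2 2)
      ((((g*Y) i 2) * g 2 2 - g i 2 * ((g*Y) 2 2)) / (g 2 2)^2) 0 := by
    intro i
    have := (hent i).div (hent 2) (by rw [hg0]; exact h33)
    simp [hg0] at this
    exact this
  have hpair := (hdiv 0).prodMk (hdiv 1)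
  have hL : HasFDerivAt H (fderiv ℝ H (pmap g)) (pmap g) :=
    (hH.differentiable (by simp) (pmap g)).hasFDerivAt
  have := (hg0 ▸ hL).comp_hasDerivAt 0 (by simpa [hg0, pmap] using hpair :
    HasDerivAt (fun t : ℝ => pmap (g * NormedSpace.exp (t • Y)))
      ((((g*Y) 0 2) * g 2 2 - g 0 2 * ((g*Y) 2 2)) / (g 2 2)^2,
       (((g*Y) 1 2) * g 2 2 - g 1 2 * ((g*Y) 2 2)) / (g 2 2)^2) 0)
  simp only [hg0] at this
  exact this

end Aux

set_option linter.unreachableTactic false in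
set_option linter.unusedTactic false in
open Complex in
theorem wirt_combo (L : ℂ × ℂ →L[ℝ] ℂ) (α β : ℂ) :
    (1/2 : ℂ) * (L (α, β) - Complex.I * L (Complex.I * α, Complex.I * β))
      = α * ((1/2) * (L (1,0) - Complex.I * L (Complex.I,0)))
        + β * ((1/2) * (L (0,1) - Complex.I * L (0,Complex.I))) := by
  have hd : ∀ z w : ℂ, (z, w) = z.re • ((1:ℂ),(0:ℂ)) + z.im • (Complex.I, 0)
      + w.re • ((0:ℂ),(1:ℂ)) + w.im • ((0:ℂ), Complex.I) := by
    intro z w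
    refine Prod.ext ?_ ?_ <;>
      simp [Complex.real_smul] <;> rw [mul_comm] <;> exact (Complex.re_add_im _).symm
  obtain ⟨a, b⟩ := α
  obtain ⟨c, d⟩ := β
  rw [hd ⟨a, b⟩ ⟨c, d⟩, hd (Complex.I * ⟨a, b⟩) (Complex.I * ⟨c, d⟩)]
  simp only [map_add, _root_.map_smul, Complex.real_smul, Complex.mul_re, Complex.mul_im,
    Complex.I_re, Complex.I_im, zero_mul, one_mul, zero_sub, add_zero, zero_add, neg_neg]
  rw [show (⟨a, b⟩ : ℂ) = (a : ℂ) + b * Complex.I from (Complex.mk_eq_add_mul_I a b),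
      show (⟨c, d⟩ : ℂ) = (c : ℂ) + d * Complex.I from (Complex.mk_eq_add_mul_I c d)]
  push_cast
  linear_combination ((b : ℂ) * L (Complex.I, 0) + (d : ℂ) * L (0, Complex.I)) / 2 * Complex.I_sq

theorem colY5 (g : Matrix (Fin 3) (Fin 3) ℂ) (i : Fin 3) : (g * matY5) i 2 = g i 1 := by
  simp [matY5, Matrix.mul_apply, Fin.sum_univ_three, Matrix.single, Matrix.sub_apply]

theorem colY6 (g : Matrix (Fin 3) (Fin 3) ℂ) (i : Fin 3) :
    (g * matY6) i 2 = Complex.I * g i 1 := by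
  simp [matY6, Matrix.mul_apply, Fin.sum_univ_three, Matrix.single, Matrix.add_apply,
    Matrix.smul_apply]
  ring

theorem colY3 (g : Matrix (Fin 3) (Fin 3) ℂ) (i : Fin 3) : (g * matY3) i 2 = g i 0 := by
  simp [matY3, Matrix.mul_apply, Fin.sum_univ_three, Matrix.single, Matrix.sub_apply]

theorem colY4 (g : Matrix (Fin 3) (Fin 3) ℂ) (i : Fin 3) :
    (g * matY4) i 2 = Complex.I * g i 0 := by
  simp [matY4, Matrix.mul_apply, Fin.sum_univ_three, Matrix.single, Matrix.add_apply,
    Matrix.smul_apply]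
  ring

/-- For a smooth `H : ℂ² → ℂ` and `g ∈ SU(3)` with `g₃₃ ≠ 0`:
`(X_β H)(g) = (conj g₁₁/g₃₃²) ∂H/∂y (p(g)) − (conj g₂₁/g₃₃²) ∂H/∂x (p(g))` and
`(X_γ H)(g) = −(conj g₁₂/g₃₃²) ∂H/∂y (p(g)) + (conj g₂₂/g₃₃²) ∂H/∂x (p(g))`. -/
theorem stmt15 (H : ℂ × ℂ → ℂ) (hH : ContDiff ℝ (⊤ : ℕ∞) H)
    (g : Matrix (Fin 3) (Fin 3) ℂ)
    (hg : g ∈ Matrix.specialUnitaryGroup (Fin 3) ℂ) (h33 : g 2 2 ≠ 0) :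
    Xbeta H g =
        ((starRingEnd ℂ) (g 0 0) / (g 2 2) ^ 2) * wirtY H (pmap g)
          - ((starRingEnd ℂ) (g 1 0) / (g 2 2) ^ 2) * wirtX H (pmap g) ∧
    Xgamma H g =
        -(((starRingEnd ℂ) (g 0 1) / (g 2 2) ^ 2)) * wirtY H (pmap g)
          + ((starRingEnd ℂ) (g 1 1) / (g 2 2) ^ 2) * wirtX H (pmap g) := by
  obtain ⟨hu, hdet⟩ := Matrix.mem_specialUnitaryGroup_iff.mp hg
  have hus : g * star g = 1 := Matrix.mem_unitaryGroup_iff.mp hu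
  have hadj : star g = adjugate g := by
    calc star g = (adjugate g * g) * star g := by
          rw [Matrix.adjugate_mul, hdet, one_smul, one_mul]
      _ = adjugate g * (g * star g) := by rw [Matrix.mul_assoc]
      _ = adjugate g := by rw [hus, mul_one]
  have hconj : ∀ i j : Fin 3, (starRingEnd ℂ) (g j i) = adjugate g i j := by
    intro i j
    rw [← hadj]
    simp [Matrix.star_apply, Complex.star_def]
  have hc00 : (starRingEnd ℂ) (g 0 0) = g 1 1 * g 2 2 - g 1 2 * g 2 1 := by
    rw [hconj 0 0, Matrix.adjugate_fin_three]; simp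
  have hc10 : (starRingEnd ℂ) (g 1 0) = -(g 0 1 * g 2 2) + g 0 2 * g 2 1 := by
    rw [hconj 0 1, Matrix.adjugate_fin_three]; simp
  have hc11 : (starRingEnd ℂ) (g 1 1) = g 0 0 * g 2 2 - g 0 2 * g 2 0 := by
    rw [hconj 1 1, Matrix.adjugate_fin_three]; simp
  have hc01 : (starRingEnd ℂ) (g 0 1) = -(g 1 0 * g 2 2) + g 1 2 * g 2 0 := by
    rw [hconj 1 0, Matrix.adjugate_fin_three]; simp
  set L := fderiv ℝ H (pmap g) with hL
  have hwx : wirtX H (pmap g) = (1/2) * (L (1,0) - Complex.I * L (Complex.I,0)) := rfl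
  have hwy : wirtY H (pmap g) = (1/2) * (L (0,1) - Complex.I * L (0,Complex.I)) := rfl
  constructor
  · set A := (g 0 1 * g 2 2 - g 0 2 * g 2 1) / (g 2 2)^2 with hA
    set B := (g 1 1 * g 2 2 - g 1 2 * g 2 1) / (g 2 2)^2 with hB
    have h5 := key H hH g matY5 h33
    have h6 := key H hH g matY6 h33
    rw [colY5, colY5, colY5, ← hA, ← hB, ← hL] at h5
    rw [colY6, colY6, colY6, ← hL] at h6
    have e6 : ((Complex.I * g 0 1 * g 2 2 - g 0 2 * (Complex.I * g 2 1)) / (g 2 2)^2,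
        (Complex.I * g 1 1 * g 2 2 - g 1 2 * (Complex.I * g 2 1)) / (g 2 2)^2)
          = (Complex.I * A, Complex.I * B) := by
      rw [hA, hB]; refine Prod.ext ?_ ?_ <;> simp <;> ring
    rw [e6] at h6
    have hXb : Xbeta H g
        = (1/2) * (L (A, B) - Complex.I * L (Complex.I * A, Complex.I * B)) := by
      rw [Xbeta]; exact congrArg _ (h5.sub (h6.const_mul Complex.I)).deriv
    rw [hXb, wirt_combo L A B, ← hwx, ← hwy, hA, hB, hc00, hc10]
    field_simp
    ring
  · set A := (g 0 0 * g 2 2 - g 0 2 * g 2 0) / (g 2 2)^2 with hA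
    set B := (g 1 0 * g 2 2 - g 1 2 * g 2 0) / (g 2 2)^2 with hB
    have h3 := key H hH g matY3 h33
    have h4 := key H hH g matY4 h33
    rw [colY3, colY3, colY3, ← hA, ← hB, ← hL] at h3
    rw [colY4, colY4, colY4, ← hL] at h4
    have e4 : ((Complex.I * g 0 0 * g 2 2 - g 0 2 * (Complex.I * g 2 0)) / (g 2 2)^2,
        (Complex.I * g 1 0 * g 2 2 - g 1 2 * (Complex.I * g 2 0)) / (g 2 2)^2)
          = (Complex.I * A, Complex.I * B) := by
      rw [hA, hB]; refine Prod.ext ?_ ?_ <;> simp <;> ring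
    rw [e4] at h4
    have hXc : Xgamma H g
        = (1/2) * (L (A, B) - Complex.I * L (Complex.I * A, Complex.I * B)) := by
      rw [Xgamma]; exact congrArg _ (h3.sub (h4.const_mul Complex.I)).deriv
    rw [hXc, wirt_combo L A B, ← hwx, ← hwy, hA, hB, hc01, hc11]
    field_simp
    ring
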